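/- Let E = Π_{l=1}^{L} E_l be a finite product of finite-dimensional real inner product spaces with the ℓ² product inner product, let K_l ⊆ E_l be subspaces with orthogonal projections P_l : E_l → E_l, and let P : E → E act componentwise by (P v)_l = P_l(v_l). Let f : E → ℝ be L_f-smooth with L_f > 0, let 0 < η ≤ 1/L_f, and let the iterates be defined by w_{s+1} = w_s − η · P(∇f(w_s)) for s = 0, 1, …, S−1, starting from any w_0 ∈ E. Then f(w_S) ≤ f(w_0) + (η/2)·Σ_{s=0}^{S−1} Σ_{l=1}^{L} ‖(∇f(w_s))_l − P_l((∇f(w_s))_l)‖² − (η/2)·Σ_{s=0}^{S−1} ‖∇f(w_s)‖². -/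

import Mathlib

/-!
A step along `-η • P ∇f` is a descent step because `P` is an orthogonal projection, so
`⟪∇f, P ∇f⟫ = ‖P ∇f‖²`; for `η ≤ 1 / L_f` the smoothness inequality then gives a decrease of
at least `(η / 2) ‖P ∇f‖²`, and Pythagoras in each factor rewrites `‖P ∇f‖²` as
`‖∇f‖² - Σ_l ‖(∇f)_l - P_l (∇f)_l‖²`. Summing over the iterations telescopes.
-/

open scoped RealInnerProductSpace

/-- The componentwise action of the projections `P l` on the `ℓ²` product space. -/
def componentwiseProj {L : ℕ} {E : Fin L → Type*}
    [∀ l, NormedAddCommGroup (E l)] [∀ l, InnerProductSpace ℝ (E l)]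
    (P : ∀ l, E l →L[ℝ] E l) (v : PiLp 2 E) : PiLp 2 E :=
  WithLp.toLp 2 (fun l => P l (v l))

section OrthogonalProjection

variable {F : Type*} [NormedAddCommGroup F] [InnerProductSpace ℝ F]
  {K : Submodule ℝ F} {P : F →L[ℝ] F}

theorem inner_sub_apply_apply_eq_zero
    (hPrange : LinearMap.range (P : F →ₗ[ℝ] F) = K) (hPorth : ∀ v, v - P v ∈ Kᗮ) (x : F) :
    ⟪x - P x, P x⟫ = 0 :=
  Submodule.inner_left_of_mem_orthogonal (hPrange ▸ LinearMap.mem_range_self _ x) (hPorth x)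

theorem inner_apply_self_eq_norm_sq
    (hPrange : LinearMap.range (P : F →ₗ[ℝ] F) = K) (hPorth : ∀ v, v - P v ∈ Kᗮ) (x : F) :
    ⟪x, P x⟫ = ‖P x‖ ^ 2 := by
  have h := inner_sub_apply_apply_eq_zero hPrange hPorth x
  rwa [inner_sub_left, real_inner_self_eq_norm_sq, sub_eq_zero] at h

theorem norm_sq_eq_norm_apply_sq_add_norm_sub_apply_sq
    (hPrange : LinearMap.range (P : F →ₗ[ℝ] F) = K) (hPorth : ∀ v, v - P v ∈ Kᗮ) (x : F) :
    ‖x‖ ^ 2 = ‖P x‖ ^ 2 + ‖x - P x‖ ^ 2 := by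
  have h := norm_add_sq_eq_norm_sq_add_norm_sq_real
    (real_inner_comm (P x) _ ▸ inner_sub_apply_apply_eq_zero hPrange hPorth x)
  simpa only [sq, add_sub_cancel] using h

end OrthogonalProjection

section Componentwise

variable {L : ℕ} {E : Fin L → Type*} [∀ l, NormedAddCommGroup (E l)]
  [∀ l, InnerProductSpace ℝ (E l)] {K : ∀ l, Submodule ℝ (E l)} {P : ∀ l, E l →L[ℝ] E l}

theorem inner_componentwiseProj_eq_norm_sq
    (hPrange : ∀ l, LinearMap.range (P l : E l →ₗ[ℝ] E l) = K l)
    (hPorth : ∀ l, ∀ v : E l, v - P l v ∈ (K l)ᗮ) (v : PiLp 2 E) :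
    ⟪v, componentwiseProj P v⟫ = ‖componentwiseProj P v‖ ^ 2 := by
  rw [PiLp.inner_apply, PiLp.norm_sq_eq_of_L2]
  exact Finset.sum_congr rfl fun l _ => inner_apply_self_eq_norm_sq (hPrange l) (hPorth l) (v l)

theorem norm_sq_eq_norm_componentwiseProj_sq_add
    (hPrange : ∀ l, LinearMap.range (P l : E l →ₗ[ℝ] E l) = K l)
    (hPorth : ∀ l, ∀ v : E l, v - P l v ∈ (K l)ᗮ) (v : PiLp 2 E) :
    ‖v‖ ^ 2 = ‖componentwiseProj P v‖ ^ 2 + ∑ l, ‖v l - P l (v l)‖ ^ 2 := by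
  rw [PiLp.norm_sq_eq_of_L2, PiLp.norm_sq_eq_of_L2, ← Finset.sum_add_distrib]
  exact Finset.sum_congr rfl fun l _ =>
    norm_sq_eq_norm_apply_sq_add_norm_sub_apply_sq (hPrange l) (hPorth l) (v l)

end Componentwise

theorem le_sub_of_smooth_of_inner_eq_norm_sq {F : Type*} [NormedAddCommGroup F]
    [InnerProductSpace ℝ F] {f : F → ℝ} {g : F → F} {Lf η : ℝ} (hLf : 0 < Lf)
    (hsmooth : ∀ v w, f w ≤ f v + ⟪g v, w - v⟫ + Lf / 2 * ‖w - v‖ ^ 2)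
    (hη₀ : 0 < η) (hη : η ≤ 1 / Lf) {v d : F} (hd : ⟪g v, d⟫ = ‖d‖ ^ 2) :
    f (v - η • d) ≤ f v - η / 2 * ‖d‖ ^ 2 := by
  have hηLf : Lf * η ≤ 1 := (le_div_iff₀' hLf).mp hη
  have h := hsmooth v (v - η • d)
  rw [sub_sub_cancel_left, inner_neg_right, real_inner_smul_right, hd, norm_neg, norm_smul,
    mul_pow, Real.norm_eq_abs, sq_abs] at h
  nlinarith [mul_nonneg (sub_nonneg.mpr hηLf) (mul_nonneg hη₀.le (sq_nonneg ‖d‖))]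

theorem le_add_sum_range_of_le_add {a b : ℕ → ℝ} (h : ∀ s, a (s + 1) ≤ a s + b s) (S : ℕ) :
    a S ≤ a 0 + ∑ s ∈ Finset.range S, b s := by
  induction S with
  | zero => simp
  | succ S ih => linarith [h S, Finset.sum_range_succ b S]

theorem statement5 {L : ℕ} {E : Fin L → Type*}
    [∀ l, NormedAddCommGroup (E l)] [∀ l, InnerProductSpace ℝ (E l)]
    (K : ∀ l, Submodule ℝ (E l)) (P : ∀ l, E l →L[ℝ] E l)
    (hPrange : ∀ l, LinearMap.range (P l : E l →ₗ[ℝ] E l) = K l)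
    (hPorth : ∀ l, ∀ v : E l, v - P l v ∈ (K l)ᗮ)
    (f : PiLp 2 E → ℝ) (g : PiLp 2 E → PiLp 2 E) (Lf : ℝ) (hLf : 0 < Lf)
    (hsmooth : ∀ v w : PiLp 2 E, f w ≤ f v + ⟪g v, w - v⟫ + Lf / 2 * ‖w - v‖ ^ 2)
    (η : ℝ) (hη₀ : 0 < η) (hη : η ≤ 1 / Lf)
    (w : ℕ → PiLp 2 E)
    (hstep : ∀ s : ℕ, w (s + 1) = w s - η • componentwiseProj P (g (w s)))
    (S : ℕ) :
    f (w S) ≤ f (w 0)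
      + η / 2 * ∑ s ∈ Finset.range S, ∑ l, ‖g (w s) l - P l (g (w s) l)‖ ^ 2
      - η / 2 * ∑ s ∈ Finset.range S, ‖g (w s)‖ ^ 2 := by
  have hdescent : ∀ s, f (w (s + 1)) ≤ f (w s)
      + (η / 2 * ∑ l, ‖g (w s) l - P l (g (w s) l)‖ ^ 2 - η / 2 * ‖g (w s)‖ ^ 2) := by
    intro s
    have hdecrease := hstep s ▸ le_sub_of_smooth_of_inner_eq_norm_sq hLf hsmooth hη₀ hη
      (inner_componentwiseProj_eq_norm_sq hPrange hPorth (g (w s)))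
    linear_combination hdecrease
      + η / 2 * norm_sq_eq_norm_componentwiseProj_sq_add hPrange hPorth (g (w s))
  have h := le_add_sum_range_of_le_add (a := fun s => f (w s)) hdescent S
  rwa [Finset.sum_sub_distrib, ← Finset.mul_sum, ← Finset.mul_sum, ← add_sub_assoc] at h
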